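/- Let G_n (n even, n ≥ 2) be the caterpillar with central path v_1,…,v_n and one leaf u_i at each v_i. Adding the n/2 edges u_2u_3, u_4u_5, …, u_{n−2}u_{n−1}, u_nu_1 yields a graph with the spanning cycle u_1 → v_1 → v_2 → u_2 → u_3 → v_3 → v_4 → u_4 → ⋯ → v_{n−1} → v_n → u_n → u_1; hence λ_H(G_n) ≤ n/2. -/

import Mathlib

/-!
The spanning cycle is the image of the cycle graph on `2n` vertices under the bijection listing
the vertices in the order `u_1 v_1 v_2 u_2 u_3 v_3 v_4 u_4 ⋯ v_n u_n`. Every added edge has the form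
`u_{2k} u_{2k+1}` with `1 ≤ k ≤ n / 2` (where `u_{n+1} = u_1`), so there are at most `n / 2`.
-/

/-- The caterpillar on `2n` vertices: central path `v_0, …, v_{n-1}` (the `Sum.inl` vertices)
with one leaf `u_i = Sum.inr i` attached to each `v_i` (0-indexed: `u_i` of the paper is
`Sum.inr (i-1)`). -/
def caterpillar1 (n : ℕ) : SimpleGraph (Fin n ⊕ Fin n) :=
  SimpleGraph.fromRel (fun a b =>
    match a, b with
    | Sum.inl i, Sum.inl j => i.val + 1 = j.val
    | Sum.inl i, Sum.inr j => i = j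
    | _, _ => False)

/-- The `n/2` added edges `u_2u_3, u_4u_5, …, u_{n-2}u_{n-1}, u_nu_1` (0-indexed:
`(1,2), (3,4), …, (n-3,n-2)` and `(n-1,0)` among the leaves). -/
def caterpillar1Extra (n : ℕ) : SimpleGraph (Fin n ⊕ Fin n) :=
  SimpleGraph.fromRel (fun a b =>
    match a, b with
    | Sum.inr i, Sum.inr j =>
        (i.val % 2 = 1 ∧ i.val + 1 = j.val) ∨ (i.val = n - 1 ∧ j.val = 0)
    | _, _ => False)

theorem Nat.add_one_mod_eq_ite {i m : ℕ} (h : i < m) :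
    (i + 1) % m = if i + 1 = m then 0 else i + 1 := by
  split_ifs with hm
  · rw [hm, Nat.mod_self]
  · exact Nat.mod_eq_of_lt (by omega)

theorem Fin.val_add_one_eq_ite {m : ℕ} [NeZero m] (i : Fin m) :
    (i + 1).val = if i.val + 1 = m then 0 else i.val + 1 := by
  rw [Fin.val_add, Fin.val_one', Nat.add_mod_mod, Nat.add_one_mod_eq_ite i.isLt]

namespace SimpleGraph

variable {α β : Type*} [Fintype α] [Fintype β] [DecidableEq α] [DecidableEq β]

theorem cycleGraph_isHamiltonian (m : ℕ) : (cycleGraph (m + 3)).IsHamiltonian :=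
  fun _ => ⟨0, cycleGraph.cycle m,
    Walk.isHamiltonianCycle_iff_isCycle_and_length_eq.mpr
      ⟨cycleGraph.isCycle_cycle, by simp⟩⟩

theorem IsHamiltonian.map {G : SimpleGraph α} {H : SimpleGraph β} (f : G →g H)
    (hf : Function.Bijective f) (hG : G.IsHamiltonian) : H.IsHamiltonian := fun hH => by
  obtain ⟨a, p, hp⟩ := hG (by rwa [Fintype.card_of_bijective hf])
  exact ⟨f a, p.map f, hp.map hf⟩

theorem isHamiltonian_of_adj_add_one {G : SimpleGraph α} {m : ℕ} [NeZero m] (hm : 3 ≤ m)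
    (e : Fin m → α) (he : Function.Bijective e) (hadj : ∀ i, G.Adj (e i) (e (i + 1))) :
    G.IsHamiltonian := by
  obtain ⟨k, rfl⟩ : ∃ k, m = k + 3 := ⟨m - 3, by omega⟩
  refine (cycleGraph_isHamiltonian k).map ⟨e, fun {i j} hij => ?_⟩ he
  rcases cycleGraph_adj'.mp hij with h | h
  · obtain rfl : i = j + 1 := sub_eq_iff_eq_add'.mp (Fin.ext (h.trans (Fin.val_one _).symm))
    exact (hadj j).symm
  · obtain rfl : j = i + 1 := sub_eq_iff_eq_add'.mp (Fin.ext (h.trans (Fin.val_one _).symm))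
    exact hadj i

end SimpleGraph

open SimpleGraph

section Caterpillar

variable {n : ℕ}

theorem caterpillar1_adj_inl_inl {i j : Fin n} (h : i.val + 1 = j.val) :
    (caterpillar1 n).Adj (.inl i) (.inl j) :=
  (fromRel_adj _ _ _).mpr ⟨by simp [Fin.ext_iff]; omega, .inl h⟩

theorem caterpillar1_adj_inl_inr {i j : Fin n} (h : i.val = j.val) :
    (caterpillar1 n).Adj (.inl i) (.inr j) :=
  (fromRel_adj _ _ _).mpr ⟨by simp, .inl (Fin.ext h)⟩

theorem caterpillar1Extra_adj_inr_inr_iff (heven : Even n) {i j : Fin n} :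
    (caterpillar1Extra n).Adj (.inr i) (.inr j) ↔
      (i.val % 2 = 1 ∧ j.val = (i.val + 1) % n) ∨ (j.val % 2 = 1 ∧ i.val = (j.val + 1) % n) := by
  obtain ⟨r, rfl⟩ := heven
  rw [caterpillar1Extra, fromRel_adj, Nat.add_one_mod_eq_ite i.isLt, Nat.add_one_mod_eq_ite j.isLt]
  simp only [ne_eq, Sum.inr.injEq, Fin.ext_iff]
  split_ifs <;> omega

def caterpillar1ExtraEdge (n : ℕ) (k : Fin (n / 2)) : Sym2 (Fin n ⊕ Fin n) :=
  have := k.isLt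
  s(.inr ⟨2 * k + 1, by omega⟩, .inr ⟨(2 * k + 2) % n, Nat.mod_lt _ (by omega)⟩)

theorem edgeSet_caterpillar1Extra_subset (heven : Even n) :
    (caterpillar1Extra n).edgeSet ⊆ Set.range (caterpillar1ExtraEdge n) := by
  have hedge {a b : Fin n} (ha : a.val % 2 = 1) (hb : b.val = (a.val + 1) % n) :
      s(.inr a, .inr b) ∈ Set.range (caterpillar1ExtraEdge n) := by
    refine ⟨⟨a / 2, by omega⟩, ?_⟩
    have hk : 2 * (a.val / 2) + 2 = a.val + 1 := by omega
    simp only [caterpillar1ExtraEdge, hk, ← hb, Sym2.eq_iff, Sum.inr.injEq, Fin.ext_iff, and_true]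
    omega
  rintro ⟨a | a, b | b⟩ hab
  · simp [caterpillar1Extra] at hab
  · simp [caterpillar1Extra] at hab
  · simp [caterpillar1Extra] at hab
  rcases (caterpillar1Extra_adj_inr_inr_iff heven).mp hab with ⟨ha, hb⟩ | ⟨hb, ha⟩
  · exact hedge ha hb
  · obtain ⟨k, hk⟩ := hedge hb ha
    exact ⟨k, hk.trans Sym2.eq_swap⟩

theorem ncard_edgeSet_caterpillar1Extra_le (heven : Even n) :
    (caterpillar1Extra n).edgeSet.ncard ≤ n / 2 :=
  calc _ ≤ (Set.range (caterpillar1ExtraEdge n)).ncard :=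
        Set.ncard_le_ncard (edgeSet_caterpillar1Extra_subset heven) (Set.finite_range _)
    _ ≤ Nat.card (Fin (n / 2)) := by
        rw [← Set.image_univ, ← Set.ncard_univ]; exact Set.ncard_image_le Set.finite_univ
    _ = n / 2 := Nat.card_fin _

-- Position `i` of the spanning cycle `u_1 v_1 v_2 u_2 u_3 v_3 v_4 u_4 ⋯` holds the vertex of
-- (0-based) index `i / 2`, a leaf exactly when `i ≡ 0, 3 (mod 4)`.
def caterpillar1Tour (n : ℕ) (i : Fin (2 * n)) : Fin n ⊕ Fin n :=
  have := i.isLt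
  if i.val % 4 = 0 ∨ i.val % 4 = 3 then .inr ⟨i / 2, by omega⟩ else .inl ⟨i / 2, by omega⟩

theorem caterpillar1Tour_injective : (caterpillar1Tour n).Injective := by
  intro i j hij
  simp only [caterpillar1Tour] at hij
  split_ifs at hij <;> simp only [Sum.inr.injEq, Sum.inl.injEq, Fin.mk.injEq] at hij <;>
    exact Fin.ext (by omega)

theorem caterpillar1Tour_bijective : (caterpillar1Tour n).Bijective :=
  (Fintype.bijective_iff_injective_and_card _).mpr
    ⟨caterpillar1Tour_injective, by simp only [Fintype.card_fin, Fintype.card_sum]; omega⟩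

theorem caterpillar1Tour_adj (heven : Even n) [NeZero (2 * n)] (i : Fin (2 * n)) :
    (caterpillar1 n ⊔ caterpillar1Extra n).Adj (caterpillar1Tour n i)
      (caterpillar1Tour n (i + 1)) := by
  obtain ⟨r, hr⟩ := heven
  have hi := i.isLt
  have hnext : (i.val + 1 < 2 * n ∧ (i + 1).val = i.val + 1) ∨
      (i.val + 1 = 2 * n ∧ (i + 1).val = 0) := by
    rw [Fin.val_add_one_eq_ite]; split_ifs <;> omega
  simp only [caterpillar1Tour]
  obtain h | h | h | h : i.val % 4 = 0 ∨ i.val % 4 = 1 ∨ i.val % 4 = 2 ∨ i.val % 4 = 3 := by omega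
  · rw [if_pos (by omega), if_neg (by omega)]
    exact .inl (caterpillar1_adj_inl_inr (by dsimp only; omega)).symm
  · rw [if_neg (by omega), if_neg (by omega)]
    exact .inl (caterpillar1_adj_inl_inl (by dsimp only; omega))
  · rw [if_neg (by omega), if_pos (by omega)]
    exact .inl (caterpillar1_adj_inl_inr (by dsimp only; omega))
  · -- at `i = 2n - 1` this is the closing edge `u_n u_1`, which needs `4 ∣ 2n`
    rw [if_pos (by omega), if_pos (by omega)]
    refine .inr ((caterpillar1Extra_adj_inr_inr_iff ⟨r, hr⟩).mpr (.inl ⟨by dsimp only; omega, ?_⟩))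
    dsimp only
    rw [Nat.add_one_mod_eq_ite (show i.val / 2 < n by omega)]
    split_ifs <;> omega

end Caterpillar

theorem caterpillar1_with_extra_isHamiltonian (n : ℕ) (hn : 2 ≤ n) (heven : Even n) :
    (caterpillar1 n ⊔ caterpillar1Extra n).IsHamiltonian ∧
    ((caterpillar1 n ⊔ caterpillar1Extra n).edgeSet \
        (caterpillar1 n).edgeSet).ncard ≤ n / 2 := by
  have : NeZero (2 * n) := ⟨by omega⟩
  refine ⟨isHamiltonian_of_adj_add_one (by omega) _ caterpillar1Tour_bijective
    (caterpillar1Tour_adj heven), ?_⟩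
  calc _ ≤ (caterpillar1Extra n).edgeSet.ncard :=
        Set.ncard_le_ncard (Set.sdiff_subset_iff.mpr (edgeSet_sup _ _).subset) (Set.toFinite _)
    _ ≤ n / 2 := ncard_edgeSet_caterpillar1Extra_le heven
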